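/- arXiv:2210.09512 — 11 statements merged into one kernel-verified Lean document; each statement's English description precedes it below -/
import Mathlib

section
/- Under the position-based model with known position bias curve p and a logging policy π₀ with full support, the INTERPOL estimator with window size T is unbiased for the expected number of clicks of the deterministic target policy π. That is, E_{Y₀∼π₀} E_c [ Σ_{y∈Y₀} (I{|rank(y|Y₀) − rank(y|Y)| ≤ T} / P(|rank(y|Y₀) − rank(y|Y)| ≤ T)) · (p_{rank(y|Y)}/p_{rank(y|Y₀)}) · c(y|Y₀) ] = Σ_{y∈Y} rel(y) · p_{rank(y|Y)}. -/
/-- Under the position-based model with known position bias curve `p`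
and a logging policy `π₀` with full support on window events, the INTERPOL estimator
with window size `T` is unbiased for the expected number of clicks of the deterministic
target ranking `Y`.  Expectations over clicks are taken analytically: under the PBM,
`E[c(y|Y₀)] = rel y * p (rank(y|Y₀))`. -/
theorem interpol_unbiased
    (K : ℕ) (A : Type*) [Fintype A] [DecidableEq A]
    (p : Fin K → ℝ) (hp0 : ∀ k, 0 < p k) (hp1 : ∀ k, p k ≤ 1)
    (rel : A → ℝ) (hrel0 : ∀ y, 0 ≤ rel y) (hrel1 : ∀ y, rel y ≤ 1)
    (π₀ : (A ≃ Fin K) → ℝ) (hπ₀ : ∀ Y₀, 0 ≤ π₀ Y₀)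
    (hπ₀sum : ∑ Y₀ : A ≃ Fin K, π₀ Y₀ = 1)
    (Y : A ≃ Fin K) (T : ℕ)
    (Pwin : A → ℝ)
    (hPwin : ∀ y, Pwin y = ∑ Y₀ : A ≃ Fin K, π₀ Y₀ *
      (if |((Y₀ y : ℕ) : ℤ) - ((Y y : ℕ) : ℤ)| ≤ (T : ℤ) then (1 : ℝ) else 0))
    (hfull : ∀ y, 0 < Pwin y) :
    ∑ Y₀ : A ≃ Fin K, π₀ Y₀ *
      ∑ y : A,
        ((if |((Y₀ y : ℕ) : ℤ) - ((Y y : ℕ) : ℤ)| ≤ (T : ℤ) then (1 : ℝ) else 0) / Pwin y) *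
          (p (Y y) / p (Y₀ y)) * (rel y * p (Y₀ y)) =
    ∑ y : A, rel y * p (Y y) := by
  simp_rw [Finset.mul_sum]
  rw [Finset.sum_comm]
  refine Finset.sum_congr rfl fun y _ => ?_
  have hcalc : ∀ Y₀ : A ≃ Fin K,
      π₀ Y₀ * (((if |((Y₀ y : ℕ) : ℤ) - ((Y y : ℕ) : ℤ)| ≤ (T : ℤ) then (1 : ℝ) else 0) / Pwin y) *
        (p (Y y) / p (Y₀ y)) * (rel y * p (Y₀ y))) =
      (rel y * p (Y y) / Pwin y) *
        (π₀ Y₀ * (if |((Y₀ y : ℕ) : ℤ) - ((Y y : ℕ) : ℤ)| ≤ (T : ℤ) then (1 : ℝ) else 0)) := by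
    intro Y₀
    split_ifs with h
    · field_simp [(hp0 (Y₀ y)).ne', (hfull y).ne']
    · simp
  simp_rw [hcalc]
  rw [← Finset.mul_sum, ← hPwin y, div_mul_cancel₀]
  exact (hfull y).ne'
end

section
/- Under the position-based model with known position bias curve p and a logging policy π₀ with full support over rankings, the position-based IPS estimator Σ_{y∈Y₀} (p_{rank(y|Y)}/p_{rank(y|Y₀)}) · c(y|Y₀) is an unbiased estimator of the target policy value Σ_{y∈Y} rel(y) · p_{rank(y|Y)}. -/
/-- Under the position-based model with known position bias curve `p`
and a logging policy `π₀` with full support over rankings, the position-based IPS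
estimator is unbiased for the target policy value `∑ y, rel y * p (rank(y|Y))`.
Clicks are integrated out analytically: `E[c(y|Y₀)] = rel y * p (rank(y|Y₀))`. -/
theorem pbm_estimator_unbiased
    (K : ℕ) (A : Type*) [Fintype A] [DecidableEq A]
    (p : Fin K → ℝ) (hp0 : ∀ k, 0 < p k) (hp1 : ∀ k, p k ≤ 1)
    (rel : A → ℝ) (hrel0 : ∀ y, 0 ≤ rel y) (hrel1 : ∀ y, rel y ≤ 1)
    (π₀ : (A ≃ Fin K) → ℝ) (hfull : ∀ Y₀, 0 < π₀ Y₀)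
    (hπ₀sum : ∑ Y₀ : A ≃ Fin K, π₀ Y₀ = 1)
    (Y : A ≃ Fin K) :
    ∑ Y₀ : A ≃ Fin K, π₀ Y₀ *
      ∑ y : A, (p (Y y) / p (Y₀ y)) * (rel y * p (Y₀ y)) =
    ∑ y : A, rel y * p (Y y) := by
  have h : ∀ Y₀ : A ≃ Fin K, ∑ y : A, (p (Y y) / p (Y₀ y)) * (rel y * p (Y₀ y))
      = ∑ y : A, rel y * p (Y y) := by
    intro Y₀
    refine Finset.sum_congr rfl fun y _ => ?_
    field_simp [(hp0 (Y₀ y)).ne']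
  simp_rw [h, ← Finset.sum_mul, hπ₀sum, one_mul]
end

section
/- Under the position-based model, the item-position model (IPM) estimator Σ_{y∈Y₀} (I{rank(y|Y₀) = rank(y|Y)} / P(rank(y|Y₀) = rank(y|Y))) · c(y|Y₀) is an unbiased estimator of the target value Σ_{y∈Y} rel(y) · p_{rank(y|Y)}, provided P(rank(y|Y₀) = rank(y|Y)) > 0 for every item y. -/
/-- Under the position-based model, the item-position model (IPM)
estimator is unbiased for the target value `∑ y, rel y * p (rank(y|Y))`, provided
the rank-match probability `Pmatch y = P(rank(y|Y₀) = rank(y|Y))` is positive for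
every item `y`.  Clicks are integrated out: `E[c(y|Y₀)] = rel y * p (rank(y|Y₀))`. -/
theorem ipm_unbiased_under_pbm
    (K : ℕ) (A : Type*) [Fintype A] [DecidableEq A]
    (p : Fin K → ℝ) (hp0 : ∀ k, 0 < p k) (hp1 : ∀ k, p k ≤ 1)
    (rel : A → ℝ) (hrel0 : ∀ y, 0 ≤ rel y) (hrel1 : ∀ y, rel y ≤ 1)
    (π₀ : (A ≃ Fin K) → ℝ) (hπ₀ : ∀ Y₀, 0 ≤ π₀ Y₀)
    (hπ₀sum : ∑ Y₀ : A ≃ Fin K, π₀ Y₀ = 1)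
    (Y : A ≃ Fin K)
    (Pmatch : A → ℝ)
    (hPmatch : ∀ y, Pmatch y = ∑ Y₀ : A ≃ Fin K, π₀ Y₀ *
      (if Y₀ y = Y y then (1 : ℝ) else 0))
    (hpos : ∀ y, 0 < Pmatch y) :
    ∑ Y₀ : A ≃ Fin K, π₀ Y₀ *
      ∑ y : A, ((if Y₀ y = Y y then (1 : ℝ) else 0) / Pmatch y) * (rel y * p (Y₀ y)) =
    ∑ y : A, rel y * p (Y y) := by
  have key : ∀ Y₀ : A ≃ Fin K, ∀ y : A,
      π₀ Y₀ * (((if Y₀ y = Y y then (1 : ℝ) else 0) / Pmatch y) * (rel y * p (Y₀ y)))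
      = (π₀ Y₀ * (if Y₀ y = Y y then (1 : ℝ) else 0)) * (rel y * p (Y y) / Pmatch y) := by
    intro Y₀ y
    by_cases h : Y₀ y = Y y
    · simp only [if_pos h, h]; ring
    · simp only [if_neg h]; ring
  calc ∑ Y₀ : A ≃ Fin K, π₀ Y₀ *
      ∑ y : A, ((if Y₀ y = Y y then (1 : ℝ) else 0) / Pmatch y) * (rel y * p (Y₀ y))
      = ∑ y : A, (∑ Y₀ : A ≃ Fin K, π₀ Y₀ * (if Y₀ y = Y y then (1 : ℝ) else 0)) *
          (rel y * p (Y y) / Pmatch y) := by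
        simp_rw [Finset.mul_sum]
        rw [Finset.sum_comm]
        refine Finset.sum_congr rfl fun y _ => ?_
        rw [Finset.sum_mul]
        exact Finset.sum_congr rfl fun Y₀ _ => key Y₀ y
    _ = ∑ y : A, rel y * p (Y y) := by
        refine Finset.sum_congr rfl fun y _ => ?_
        rw [← hPmatch y]
        rw [mul_comm, div_mul_cancel₀ _ (hpos y).ne']
end

section
/- Under the position-based model with a misspecified position bias curve q (used in the estimator) instead of the true curve p, the expected value of the PBM IPS estimator equals Σ_{y} rel(y) · E_{Y₀∼π₀}[ (q_{rank(y|Y)}/q_{rank(y|Y₀)}) · p_{rank(y|Y₀)} ]. Consequently, the estimator is unbiased for all relevance functions rel if and only if E_{Y₀}[ p_{rank(y|Y₀)} / q_{rank(y|Y₀)} ] · q_{rank(y|Y)} = p_{rank(y|Y)} for every item y. -/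
/-- Under the position-based model with true curve `p`, the PBM IPS
estimator built from a misspecified curve `q` has expectation
`∑ y, rel y * E_{Y₀}[(q (rank(y|Y)) / q (rank(y|Y₀))) * p (rank(y|Y₀))]`.
It is unbiased for all relevance functions `rel : A → [0,1]` iff
`E_{Y₀}[p (rank(y|Y₀)) / q (rank(y|Y₀))] * q (rank(y|Y)) = p (rank(y|Y))`
for every item `y`. -/
theorem misspecified_pbm_expectation
    (K : ℕ) (A : Type*) [Fintype A] [DecidableEq A]
    (p q : Fin K → ℝ) (hp0 : ∀ k, 0 < p k) (hp1 : ∀ k, p k ≤ 1)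
    (hq0 : ∀ k, 0 < q k) (hq1 : ∀ k, q k ≤ 1)
    (π₀ : (A ≃ Fin K) → ℝ) (hπ₀ : ∀ Y₀, 0 ≤ π₀ Y₀)
    (hπ₀sum : ∑ Y₀ : A ≃ Fin K, π₀ Y₀ = 1)
    (Y : A ≃ Fin K) :
    (∀ rel : A → ℝ, (∀ y, 0 ≤ rel y) → (∀ y, rel y ≤ 1) →
      ∑ Y₀ : A ≃ Fin K, π₀ Y₀ * ∑ y : A, (q (Y y) / q (Y₀ y)) * (rel y * p (Y₀ y)) =
      ∑ y : A, rel y * ∑ Y₀ : A ≃ Fin K, π₀ Y₀ * ((q (Y y) / q (Y₀ y)) * p (Y₀ y))) ∧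
    ((∀ rel : A → ℝ, (∀ y, 0 ≤ rel y) → (∀ y, rel y ≤ 1) →
        ∑ Y₀ : A ≃ Fin K, π₀ Y₀ * ∑ y : A, (q (Y y) / q (Y₀ y)) * (rel y * p (Y₀ y)) =
        ∑ y : A, rel y * p (Y y)) ↔
      (∀ y : A, (∑ Y₀ : A ≃ Fin K, π₀ Y₀ * (p (Y₀ y) / q (Y₀ y))) * q (Y y) = p (Y y))) := by
  have hswap : ∀ rel : A → ℝ,
      ∑ Y₀ : A ≃ Fin K, π₀ Y₀ * ∑ y : A, (q (Y y) / q (Y₀ y)) * (rel y * p (Y₀ y)) =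
      ∑ y : A, rel y * ∑ Y₀ : A ≃ Fin K, π₀ Y₀ * ((q (Y y) / q (Y₀ y)) * p (Y₀ y)) := by
    intro rel
    simp only [Finset.mul_sum]
    rw [Finset.sum_comm]
    congr 1; funext y
    congr 1; funext Y₀; ring
  have key : ∀ y : A,
      (∑ Y₀ : A ≃ Fin K, π₀ Y₀ * (p (Y₀ y) / q (Y₀ y))) * q (Y y) =
      ∑ Y₀ : A ≃ Fin K, π₀ Y₀ * ((q (Y y) / q (Y₀ y)) * p (Y₀ y)) := by
    intro y
    rw [Finset.sum_mul]
    congr 1; funext Y₀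
    field_simp
  refine ⟨fun rel _ _ => hswap rel, ?_⟩
  constructor
  · intro h y
    have h1 := h (fun z => if z = y then 1 else 0)
      (fun z => by by_cases hz : z = y <;> simp [hz])
      (fun z => by by_cases hz : z = y <;> simp [hz])
    rw [hswap] at h1
    simp only [ite_mul, one_mul, zero_mul, Finset.sum_ite_eq', Finset.mem_univ,
      if_true] at h1
    rw [key]
    exact h1
  · intro h rel _ _
    rw [hswap]
    congr 1; funext y
    rw [← key, h]
end

section
/- Under the position-based model with true curve p, the INTERPOL estimator built with a misspecified curve q has expectation Σ_y rel(y) · q_{rank(y|Y)} · E[ (p_{rank(y|Y₀)}/q_{rank(y|Y₀)}) · I{|rank(y|Y₀) − rank(y|Y)| ≤ T} ] / P(|rank(y|Y₀) − rank(y|Y)| ≤ T). In particular, its bias for item y is rel(y) · ( q_{rank(y|Y)} · E[ p/q ratio restricted to window ]/P(window) − p_{rank(y|Y)} ). -/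
/-- Under the position-based model with true curve `p`, the INTERPOL
estimator built with a misspecified curve `q` has expectation
`∑ y, rel y * q (rank(y|Y)) * E[(p/q)(rank(y|Y₀)) * I{window}] / P(window)`,
and its bias is the sum over items of
`rel y * (q (rank(y|Y)) * E[(p/q) on window] / P(window) - p (rank(y|Y)))`. -/
theorem interpol_misspecified_expectation_and_bias
    (K : ℕ) (A : Type*) [Fintype A] [DecidableEq A]
    (p q : Fin K → ℝ) (hp0 : ∀ k, 0 < p k) (hp1 : ∀ k, p k ≤ 1)
    (hq0 : ∀ k, 0 < q k) (hq1 : ∀ k, q k ≤ 1)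
    (rel : A → ℝ) (hrel0 : ∀ y, 0 ≤ rel y) (hrel1 : ∀ y, rel y ≤ 1)
    (π₀ : (A ≃ Fin K) → ℝ) (hπ₀ : ∀ Y₀, 0 ≤ π₀ Y₀)
    (hπ₀sum : ∑ Y₀ : A ≃ Fin K, π₀ Y₀ = 1)
    (Y : A ≃ Fin K) (T : ℕ)
    (Pwin : A → ℝ)
    (hPwin : ∀ y, Pwin y = ∑ Y₀ : A ≃ Fin K, π₀ Y₀ *
      (if |((Y₀ y : ℕ) : ℤ) - ((Y y : ℕ) : ℤ)| ≤ (T : ℤ) then (1 : ℝ) else 0))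
    (hfull : ∀ y, 0 < Pwin y) :
    (∑ Y₀ : A ≃ Fin K, π₀ Y₀ * ∑ y : A,
        (((if |((Y₀ y : ℕ) : ℤ) - ((Y y : ℕ) : ℤ)| ≤ (T : ℤ) then (1 : ℝ) else 0) /
            Pwin y) * (q (Y y) / q (Y₀ y))) * (rel y * p (Y₀ y)) =
      ∑ y : A, rel y * q (Y y) *
        ((∑ Y₀ : A ≃ Fin K, π₀ Y₀ * ((p (Y₀ y) / q (Y₀ y)) *
          (if |((Y₀ y : ℕ) : ℤ) - ((Y y : ℕ) : ℤ)| ≤ (T : ℤ) then (1 : ℝ) else 0))) /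
          Pwin y)) ∧
    (∑ Y₀ : A ≃ Fin K, π₀ Y₀ * ∑ y : A,
        (((if |((Y₀ y : ℕ) : ℤ) - ((Y y : ℕ) : ℤ)| ≤ (T : ℤ) then (1 : ℝ) else 0) /
            Pwin y) * (q (Y y) / q (Y₀ y))) * (rel y * p (Y₀ y)) -
      ∑ y : A, rel y * p (Y y) =
      ∑ y : A, rel y *
        (q (Y y) *
          ((∑ Y₀ : A ≃ Fin K, π₀ Y₀ * ((p (Y₀ y) / q (Y₀ y)) *
            (if |((Y₀ y : ℕ) : ℤ) - ((Y y : ℕ) : ℤ)| ≤ (T : ℤ) then (1 : ℝ) else 0))) /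
            Pwin y) - p (Y y))) := by

  have key : (∑ Y₀ : A ≃ Fin K, π₀ Y₀ * ∑ y : A,
        (((if |((Y₀ y : ℕ) : ℤ) - ((Y y : ℕ) : ℤ)| ≤ (T : ℤ) then (1 : ℝ) else 0) /
            Pwin y) * (q (Y y) / q (Y₀ y))) * (rel y * p (Y₀ y)) =
      ∑ y : A, rel y * q (Y y) *
        ((∑ Y₀ : A ≃ Fin K, π₀ Y₀ * ((p (Y₀ y) / q (Y₀ y)) *
          (if |((Y₀ y : ℕ) : ℤ) - ((Y y : ℕ) : ℤ)| ≤ (T : ℤ) then (1 : ℝ) else 0))) /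
          Pwin y)) := by
    simp_rw [Finset.mul_sum]
    rw [Finset.sum_comm]
    refine Finset.sum_congr rfl (fun y _ => ?_)
    simp_rw [div_eq_mul_inv, Finset.sum_mul, Finset.mul_sum]
    refine Finset.sum_congr rfl (fun Y₀ _ => ?_)
    have h1 : q (Y₀ y) ≠ 0 := (hq0 _).ne'
    have h2 : Pwin y ≠ 0 := (hfull y).ne'
    field_simp
  refine ⟨key, ?_⟩
  rw [key, ← Finset.sum_sub_distrib]
  refine Finset.sum_congr rfl (fun y _ => ?_)
  ring
end

section
/- If the misspecified position bias curve q agrees with the true curve p on all positions within distance T of the target rank of every item (i.e., q_k = p_k for all k with |k − rank(y|Y)| ≤ T, for every y), then the INTERPOL estimator with window size T built from q is unbiased under the position-based model with curve p. -/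
/-!
Exchanging the two sums reduces unbiasedness to one item `y` at a time. Inside the window
`|rank(y|Y₀) − rank(y|Y)| ≤ T` both positions `rank(y|Y₀)` and `rank(y|Y)` lie within distance `T`
of `rank(y|Y)`, where `q = p`; so there the weighted click probability
`q_{rank(y|Y)} / q_{rank(y|Y₀)} · rel(y) p_{rank(y|Y₀)}` is exactly `rel(y) p_{rank(y|Y)}`, and
averaging this constant over the logging policy conditioned on the window returns it.
-/

theorem sum_mul_indicator_div_mul_eq_of_eqOn {ι : Type*} [Fintype ι] (π : ι → ℝ)
    (s : ι → Prop) [DecidablePred s] (g : ι → ℝ) (c : ℝ) (hg : ∀ i, s i → g i = c)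
    (hP : ∑ i, π i * (if s i then 1 else 0) ≠ 0) :
    ∑ i, π i * ((if s i then 1 else 0) / (∑ j, π j * (if s j then 1 else 0)) * g i) = c := by
  set P := ∑ j, π j * (if s j then (1 : ℝ) else 0)
  have hterm : ∀ i, π i * ((if s i then 1 else 0) / P * g i) =
      π i * (if s i then 1 else 0) * (c / P) := by
    intro i
    by_cases hi : s i
    · simp only [if_pos hi, hg i hi]; ring
    · simp only [if_neg hi]; ring
  rw [Fintype.sum_congr _ _ hterm, ← Finset.sum_mul, mul_div_cancel₀ c hP]

theorem interpol_locally_correct_curve_unbiased_general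
    (K : ℕ) (A : Type*) [Fintype A] [DecidableEq A]
    (p q : Fin K → ℝ)
    (hq0 : ∀ k, 0 < q k)
    (rel : A → ℝ)
    (π₀ : (A ≃ Fin K) → ℝ)
    (Y : A ≃ Fin K) (T : ℕ)
    (Pwin : A → ℝ)
    (hPwin : ∀ y, Pwin y = ∑ Y₀ : A ≃ Fin K, π₀ Y₀ *
      (if |((Y₀ y : ℕ) : ℤ) - ((Y y : ℕ) : ℤ)| ≤ (T : ℤ) then (1 : ℝ) else 0))
    (hfull : ∀ y, 0 < Pwin y)
    (hlocal : ∀ (y : A) (k : Fin K),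
      |((k : ℕ) : ℤ) - ((Y y : ℕ) : ℤ)| ≤ (T : ℤ) → q k = p k) :
    ∑ Y₀ : A ≃ Fin K, π₀ Y₀ * ∑ y : A,
        (((if |((Y₀ y : ℕ) : ℤ) - ((Y y : ℕ) : ℤ)| ≤ (T : ℤ) then (1 : ℝ) else 0) /
            Pwin y) * (q (Y y) / q (Y₀ y))) * (rel y * p (Y₀ y)) =
    ∑ y : A, rel y * p (Y y) := by
  simp only [Finset.mul_sum, mul_assoc]
  rw [Finset.sum_comm]
  refine Fintype.sum_congr _ _ fun y => ?_
  have hcorrect : ∀ Y₀ : A ≃ Fin K, |((Y₀ y : ℕ) : ℤ) - ((Y y : ℕ) : ℤ)| ≤ (T : ℤ) →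
      q (Y y) / q (Y₀ y) * (rel y * p (Y₀ y)) = rel y * p (Y y) := by
    intro Y₀ hwin
    have hY₀ := hlocal y (Y₀ y) hwin
    rw [hlocal y (Y y) (by simp), ← hY₀]
    field_simp [(hq0 (Y₀ y)).ne']
  have hPwin_ne := (hfull y).ne'
  rw [hPwin y] at hPwin_ne ⊢
  exact sum_mul_indicator_div_mul_eq_of_eqOn π₀ _ _ _ hcorrect hPwin_ne

/-- If the misspecified position bias curve `q` agrees with the true
curve `p` on all positions within distance `T` of the target rank of every item,
then the INTERPOL estimator with window size `T` built from `q` is unbiased under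
the position-based model with curve `p`. -/
theorem interpol_locally_correct_curve_unbiased
    (K : ℕ) (A : Type*) [Fintype A] [DecidableEq A]
    (p q : Fin K → ℝ) (hp0 : ∀ k, 0 < p k) (hp1 : ∀ k, p k ≤ 1)
    (hq0 : ∀ k, 0 < q k) (hq1 : ∀ k, q k ≤ 1)
    (rel : A → ℝ) (hrel0 : ∀ y, 0 ≤ rel y) (hrel1 : ∀ y, rel y ≤ 1)
    (π₀ : (A ≃ Fin K) → ℝ) (hπ₀ : ∀ Y₀, 0 ≤ π₀ Y₀)
    (hπ₀sum : ∑ Y₀ : A ≃ Fin K, π₀ Y₀ = 1)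
    (Y : A ≃ Fin K) (T : ℕ)
    (Pwin : A → ℝ)
    (hPwin : ∀ y, Pwin y = ∑ Y₀ : A ≃ Fin K, π₀ Y₀ *
      (if |((Y₀ y : ℕ) : ℤ) - ((Y y : ℕ) : ℤ)| ≤ (T : ℤ) then (1 : ℝ) else 0))
    (hfull : ∀ y, 0 < Pwin y)
    (hlocal : ∀ (y : A) (k : Fin K),
      |((k : ℕ) : ℤ) - ((Y y : ℕ) : ℤ)| ≤ (T : ℤ) → q k = p k) :
    ∑ Y₀ : A ≃ Fin K, π₀ Y₀ * ∑ y : A,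
        (((if |((Y₀ y : ℕ) : ℤ) - ((Y y : ℕ) : ℤ)| ≤ (T : ℤ) then (1 : ℝ) else 0) /
            Pwin y) * (q (Y y) / q (Y₀ y))) * (rel y * p (Y₀ y)) =
    ∑ y : A, rel y * p (Y y) :=
  interpol_locally_correct_curve_unbiased_general K A p q hq0 rel π₀ Y T Pwin hPwin hfull hlocal
end

section
/- Under the position-based model, for a single item y the conditional expectation (given Y₀) of the INTERPOL term w_T(y|Y,Y₀)·c(y|Y₀) equals rel(y) · p_{rank(y|Y)} · I{|rank(y|Y₀) − rank(y|Y)| ≤ T} / P(|rank(y|Y₀) − rank(y|Y)| ≤ T). Hence taking the outer expectation over Y₀ yields rel(y) · p_{rank(y|Y)}, independently of T. -/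
/-- Under the position-based model, for a single item `y` the
conditional expectation (given `Y₀`) of the INTERPOL term `w_T(y|Y,Y₀) * c(y|Y₀)`
equals `rel y * p (rank(y|Y)) * I{window} / P(window)`, and the outer expectation
over `Y₀ ∼ π₀` equals `rel y * p (rank(y|Y))`, independently of `T`.
(The conditional click expectation `E[c(y|Y₀) | Y₀] = rel y * p (rank(y|Y₀))`
is substituted analytically.) -/
theorem interpol_single_item_expectation
    (K : ℕ) (A : Type*) [Fintype A] [DecidableEq A]
    (p : Fin K → ℝ) (hp0 : ∀ k, 0 < p k) (hp1 : ∀ k, p k ≤ 1)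
    (rel : A → ℝ) (hrel0 : ∀ y, 0 ≤ rel y) (hrel1 : ∀ y, rel y ≤ 1)
    (π₀ : (A ≃ Fin K) → ℝ) (hπ₀ : ∀ Y₀, 0 ≤ π₀ Y₀)
    (hπ₀sum : ∑ Y₀ : A ≃ Fin K, π₀ Y₀ = 1)
    (Y : A ≃ Fin K) (T : ℕ) (y : A)
    (Pwin : ℝ)
    (hPwin : Pwin = ∑ Y₀ : A ≃ Fin K, π₀ Y₀ *
      (if |((Y₀ y : ℕ) : ℤ) - ((Y y : ℕ) : ℤ)| ≤ (T : ℤ) then (1 : ℝ) else 0))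
    (hfull : 0 < Pwin) :
    (∀ Y₀ : A ≃ Fin K,
      (((if |((Y₀ y : ℕ) : ℤ) - ((Y y : ℕ) : ℤ)| ≤ (T : ℤ) then (1 : ℝ) else 0) / Pwin) *
          (p (Y y) / p (Y₀ y))) * (rel y * p (Y₀ y)) =
      rel y * p (Y y) *
        (if |((Y₀ y : ℕ) : ℤ) - ((Y y : ℕ) : ℤ)| ≤ (T : ℤ) then (1 : ℝ) else 0) / Pwin) ∧
    (∑ Y₀ : A ≃ Fin K, π₀ Y₀ *
        ((((if |((Y₀ y : ℕ) : ℤ) - ((Y y : ℕ) : ℤ)| ≤ (T : ℤ) then (1 : ℝ) else 0) / Pwin) *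
          (p (Y y) / p (Y₀ y))) * (rel y * p (Y₀ y))) =
      rel y * p (Y y)) := by
  have key : ∀ Y₀ : A ≃ Fin K,
      (((if |((Y₀ y : ℕ) : ℤ) - ((Y y : ℕ) : ℤ)| ≤ (T : ℤ) then (1 : ℝ) else 0) / Pwin) *
          (p (Y y) / p (Y₀ y))) * (rel y * p (Y₀ y)) =
      rel y * p (Y y) *
        (if |((Y₀ y : ℕ) : ℤ) - ((Y y : ℕ) : ℤ)| ≤ (T : ℤ) then (1 : ℝ) else 0) / Pwin := by
    intro Y₀
    have h1 : p (Y₀ y) ≠ 0 := ne_of_gt (hp0 _)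
    field_simp
  refine ⟨key, ?_⟩
  calc ∑ Y₀ : A ≃ Fin K, π₀ Y₀ *
        ((((if |((Y₀ y : ℕ) : ℤ) - ((Y y : ℕ) : ℤ)| ≤ (T : ℤ) then (1 : ℝ) else 0) / Pwin) *
          (p (Y y) / p (Y₀ y))) * (rel y * p (Y₀ y)))
      = ∑ Y₀ : A ≃ Fin K, (rel y * p (Y y) / Pwin) * (π₀ Y₀ *
          (if |((Y₀ y : ℕ) : ℤ) - ((Y y : ℕ) : ℤ)| ≤ (T : ℤ) then (1 : ℝ) else 0)) := by
        refine Finset.sum_congr rfl fun Y₀ _ => ?_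
        rw [key Y₀]; ring
    _ = (rel y * p (Y y) / Pwin) * Pwin := by
        rw [← Finset.mul_sum, hPwin]
    _ = rel y * p (Y y) := by
        field_simp
end

section
/- The empirical INTERPOL estimator, the average over n i.i.d. logged samples of Σ_{y∈Y₀,i} w_T(y|Y,Y₀,i)·c_i(y|Y₀,i), converges in probability (weak law of large numbers) to the target value Σ_{y∈Y} rel(y)·p_{rank(y|Y)} as n → ∞, under the position-based model with correctly specified position bias curve and positive window probabilities. -/
/-!
Under the position-based model, conditionally on the logged ranking `Y₀` the item `y` is clicked
with probability `rel y * p (rank(y|Y₀))`, so the propensity ratio `p (rank(y|Y)) / p (rank(y|Y₀))`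
turns its expected weighted click into `rel y * p (rank(y|Y))` times the window indicator divided
by `Pwin y`. Averaging the window indicator over `Y₀ ∼ π₀` gives back `Pwin y`, so each logged
term has mean `∑ y, rel y * p (rank(y|Y))`. The terms are i.i.d. and take finitely many values,
so the strong law of large numbers gives almost sure, hence in-measure, convergence.
-/

open MeasureTheory ProbabilityTheory Filter Finset

section Bernoulli

variable {A : Type*} [Fintype A]

def bernoulliProd (q : A → ℝ) (c : A → Bool) : ℝ :=
  ∏ y, if c y then q y else 1 - q y

lemma bernoulliProd_nonneg {q : A → ℝ} (hq0 : ∀ y, 0 ≤ q y) (hq1 : ∀ y, q y ≤ 1)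
    (c : A → Bool) : 0 ≤ bernoulliProd q c :=
  prod_nonneg fun y _ => by split <;> linarith [hq0 y, hq1 y]

variable [DecidableEq A]

lemma sum_bernoulliProd_mul_ite (q : A → ℝ) (y₀ : A) :
    ∑ c, bernoulliProd q c * (if c y₀ then 1 else 0) = q y₀ := by
  -- the indicator of `c y₀` only replaces the factor `1 - q y₀` by `0`
  have hfactor : ∀ c : A → Bool, bernoulliProd q c * (if c y₀ then 1 else 0) =
      ∏ y, if c y then q y else if y = y₀ then 0 else 1 - q y := by
    intro c
    by_cases hc : c y₀
    · simp only [hc, if_true, mul_one, bernoulliProd]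
      exact prod_congr rfl fun y _ => by by_cases hy : y = y₀ <;> simp [hy, hc]
    · rw [prod_eq_zero (mem_univ y₀) (by simp [hc])]
      simp [hc]
  rw [sum_congr rfl fun c _ => hfactor c,
    ← Fintype.prod_sum fun y (b : Bool) => if b then q y else if y = y₀ then 0 else 1 - q y]
  have hcoord : ∀ y, ∑ b : Bool, (if b then q y else if y = y₀ then 0 else 1 - q y) =
      if y = y₀ then q y else 1 := fun y => by
    by_cases hy : y = y₀ <;> simp [hy]
  simp only [hcoord, prod_ite_eq', mem_univ, if_true]

lemma sum_bernoulliProd_mul_sum (q a : A → ℝ) :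
    ∑ c, bernoulliProd q c * ∑ y, a y * (if c y then 1 else 0) = ∑ y, a y * q y := by
  simp only [mul_sum]
  rw [sum_comm]
  refine sum_congr rfl fun y _ => ?_
  rw [← sum_bernoulliProd_mul_ite q y, mul_sum]
  exact sum_congr rfl fun c _ => by ring

end Bernoulli

section FiniteValued

variable {Ω E : Type*} [MeasurableSpace Ω] {μ : Measure Ω}
  [MeasurableSpace E] [DiscreteMeasurableSpace E]

lemma identDistrib_of_measure_preimage_singleton [Countable E] {Ω' : Type*}
    [MeasurableSpace Ω'] {ν : Measure Ω'} {X : Ω → E} {X' : Ω' → E}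
    (hX : Measurable X) (hX' : Measurable X') (h : ∀ z, μ (X ⁻¹' {z}) = ν (X' ⁻¹' {z})) :
    IdentDistrib X X' μ ν where
  aemeasurable_fst := hX.aemeasurable
  aemeasurable_snd := hX'.aemeasurable
  map_eq := Measure.ext_of_singleton fun z => by
    rw [Measure.map_apply hX (measurableSet_singleton z),
      Measure.map_apply hX' (measurableSet_singleton z), h]

lemma integral_comp_eq_sum_measureReal_preimage [Fintype E] [IsFiniteMeasure μ] {X : Ω → E}
    (hX : Measurable X) (g : E → ℝ) :
    ∫ ω, g (X ω) ∂μ = ∑ z, μ.real (X ⁻¹' {z}) * g z := by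
  rw [← integral_map hX.aemeasurable Measurable.of_discrete.aestronglyMeasurable,
    integral_fintype Integrable.of_finite]
  simp only [measureReal_def, Measure.map_apply hX (measurableSet_singleton _), smul_eq_mul]

theorem tendstoInMeasure_average_comp_of_iIndepFun [Finite E] [IsProbabilityMeasure μ]
    {X : ℕ → Ω → E} (hindep : iIndepFun X μ) (hident : ∀ i, IdentDistrib (X i) (X 0) μ μ)
    (g : E → ℝ) :
    TendstoInMeasure μ (fun (n : ℕ) ω => (n : ℝ)⁻¹ * ∑ i ∈ range n, g (X i ω)) atTop
      (fun _ => ∫ ω, g (X 0 ω) ∂μ) := by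
  have hg : Measurable g := .of_discrete
  have hslln := strong_law_ae (fun i ω => g (X i ω))
    (Integrable.of_finite.comp_aemeasurable (hident 0).aemeasurable_fst)
    (fun i j hij => (hindep.indepFun hij).comp hg hg) (fun i => (hident i).comp hg)
  refine tendstoInMeasure_of_tendsto_ae (fun n => ?_) hslln
  exact aestronglyMeasurable_const.mul (Finset.aestronglyMeasurable_fun_sum _ fun i _ =>
    (hg.comp_aemeasurable (hident i).aemeasurable_fst).aestronglyMeasurable)

end FiniteValued

section Interpol

variable {K : ℕ} {A : Type*}

def windowIndicator (T : ℕ) (Y Y₀ : A ≃ Fin K) (y : A) : ℝ :=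
  if |((Y₀ y : ℕ) : ℤ) - ((Y y : ℕ) : ℤ)| ≤ (T : ℤ) then 1 else 0

noncomputable def interpolWeight (T : ℕ) (Pwin : A → ℝ) (p : Fin K → ℝ) (Y Y₀ : A ≃ Fin K)
    (y : A) : ℝ :=
  windowIndicator T Y Y₀ y / Pwin y * (p (Y y) / p (Y₀ y))

variable [Fintype A]

noncomputable def interpolTerm (T : ℕ) (Pwin : A → ℝ) (p : Fin K → ℝ) (Y : A ≃ Fin K)
    (z : (A ≃ Fin K) × (A → Bool)) : ℝ :=
  ∑ y, interpolWeight T Pwin p Y z.1 y * (if z.2 y then 1 else 0)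

variable [DecidableEq A] {T : ℕ} {Pwin : A → ℝ} {p : Fin K → ℝ} {Y : A ≃ Fin K}
  {π₀ : (A ≃ Fin K) → ℝ}

lemma sum_mul_sum_interpolWeight_mul (rel : A → ℝ) (hp0 : ∀ k, p k ≠ 0)
    (hPwin : ∀ y, Pwin y = ∑ Y₀, π₀ Y₀ * windowIndicator T Y Y₀ y) (hPwin0 : ∀ y, Pwin y ≠ 0) :
    ∑ Y₀, π₀ Y₀ * ∑ y, interpolWeight T Pwin p Y Y₀ y * (rel y * p (Y₀ y)) =
      ∑ y, rel y * p (Y y) := by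
  have hcancel : ∀ Y₀ y, interpolWeight T Pwin p Y Y₀ y * (rel y * p (Y₀ y)) =
      windowIndicator T Y Y₀ y * (rel y * p (Y y) / Pwin y) := fun Y₀ y => by
    rw [interpolWeight]
    field_simp [hp0 (Y₀ y), hPwin0 y]
  simp only [hcancel, mul_sum]
  rw [sum_comm]
  refine sum_congr rfl fun y _ => ?_
  simp only [← mul_assoc, ← sum_mul, ← hPwin y]
  field_simp [hPwin0 y]

lemma sum_pbm_mul_interpolTerm (rel : A → ℝ) (hp0 : ∀ k, p k ≠ 0)
    (hPwin : ∀ y, Pwin y = ∑ Y₀, π₀ Y₀ * windowIndicator T Y Y₀ y) (hPwin0 : ∀ y, Pwin y ≠ 0) :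
    ∑ z : (A ≃ Fin K) × (A → Bool),
        π₀ z.1 * bernoulliProd (fun y => rel y * p (z.1 y)) z.2 * interpolTerm T Pwin p Y z =
      ∑ y, rel y * p (Y y) := by
  rw [Fintype.sum_prod_type, ← sum_mul_sum_interpolWeight_mul rel hp0 hPwin hPwin0]
  refine sum_congr rfl fun Y₀ _ => ?_
  simp only [mul_assoc, ← mul_sum, interpolTerm, sum_bernoulliProd_mul_sum]

end Interpol

theorem interpol_weak_law_of_large_numbers_general
    (K : ℕ) (A : Type*) [Fintype A] [DecidableEq A]
    (p : Fin K → ℝ) (hp0 : ∀ k, 0 < p k) (hp1 : ∀ k, p k ≤ 1)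
    (rel : A → ℝ) (hrel0 : ∀ y, 0 ≤ rel y) (hrel1 : ∀ y, rel y ≤ 1)
    (π₀ : (A ≃ Fin K) → ℝ) (hπ₀ : ∀ Y₀, 0 ≤ π₀ Y₀)
    (Y : A ≃ Fin K) (T : ℕ)
    (Pwin : A → ℝ)
    (hPwin : ∀ y, Pwin y = ∑ Y₀ : A ≃ Fin K, π₀ Y₀ *
      (if |((Y₀ y : ℕ) : ℤ) - ((Y y : ℕ) : ℤ)| ≤ (T : ℤ) then (1 : ℝ) else 0))
    (hfull : ∀ y, 0 < Pwin y)
    (Ω : Type*) [MeasurableSpace Ω] (μ : Measure Ω) [IsProbabilityMeasure μ]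
    (X : ℕ → Ω → (A ≃ Fin K) × (A → Bool))
    (hmeas : ∀ i, @Measurable Ω ((A ≃ Fin K) × (A → Bool)) _
      (⊤ : MeasurableSpace ((A ≃ Fin K) × (A → Bool))) (X i))
    (hindep : ProbabilityTheory.iIndepFun
      (m := fun _ : ℕ => (⊤ : MeasurableSpace ((A ≃ Fin K) × (A → Bool)))) X μ)
    (hdist : ∀ (i : ℕ) (z : (A ≃ Fin K) × (A → Bool)),
      μ (X i ⁻¹' {z}) = ENNReal.ofReal (π₀ z.1 *
        ∏ y : A, (if z.2 y then rel y * p (z.1 y) else 1 - rel y * p (z.1 y)))) :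
    TendstoInMeasure μ
      (fun (n : ℕ) ω => ((n : ℝ))⁻¹ * ∑ i ∈ Finset.range n,
        ∑ y : A,
          (((if |(((X i ω).1 y : ℕ) : ℤ) - ((Y y : ℕ) : ℤ)| ≤ (T : ℤ) then (1 : ℝ) else 0) /
              Pwin y) * (p (Y y) / p ((X i ω).1 y))) *
            (if (X i ω).2 y then (1 : ℝ) else 0))
      atTop
      (fun _ => ∑ y : A, rel y * p (Y y)) := by
  let _ : MeasurableSpace ((A ≃ Fin K) × (A → Bool)) := ⊤
  have hident : ∀ i, IdentDistrib (X i) (X 0) μ μ := fun i =>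
    identDistrib_of_measure_preimage_singleton (hmeas i) (hmeas 0) fun z => by rw [hdist, hdist]
  have hlaw : ∀ z, μ.real (X 0 ⁻¹' {z}) =
      π₀ z.1 * bernoulliProd (fun y => rel y * p (z.1 y)) z.2 := fun z => by
    refine (congrArg ENNReal.toReal (hdist 0 z)).trans (ENNReal.toReal_ofReal ?_)
    exact mul_nonneg (hπ₀ _) (bernoulliProd_nonneg (fun y => mul_nonneg (hrel0 y) (hp0 _).le)
      (fun y => mul_le_one₀ (hrel1 y) (hp0 _).le (hp1 _)) _)
  have hmean : ∫ ω, interpolTerm T Pwin p Y (X 0 ω) ∂μ = ∑ y, rel y * p (Y y) := by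
    rw [integral_comp_eq_sum_measureReal_preimage (hmeas 0)]
    simp only [hlaw]
    exact sum_pbm_mul_interpolTerm rel (fun k => (hp0 k).ne') hPwin (fun y => (hfull y).ne')
  have hwlln := tendstoInMeasure_average_comp_of_iIndepFun hindep hident (interpolTerm T Pwin p Y)
  rwa [hmean] at hwlln

/-- Weak law of large numbers for INTERPOL.  Logged samples
`X i = (Y₀ᵢ, cᵢ)` (ranking and click pattern) are i.i.d. with the joint law of
the logging policy `π₀` and PBM clicks (item `y` clicked with probability
`rel y * p (rank(y|Y₀))`, independently across items).  The empirical INTERPOL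
estimator (average over `n` samples of `∑_y w_T(y|Y,Y₀ᵢ) * cᵢ(y)`) converges in
probability to the target value `∑ y, rel y * p (rank(y|Y))`. -/
theorem interpol_weak_law_of_large_numbers
    (K : ℕ) (A : Type*) [Fintype A] [DecidableEq A]
    (p : Fin K → ℝ) (hp0 : ∀ k, 0 < p k) (hp1 : ∀ k, p k ≤ 1)
    (rel : A → ℝ) (hrel0 : ∀ y, 0 ≤ rel y) (hrel1 : ∀ y, rel y ≤ 1)
    (π₀ : (A ≃ Fin K) → ℝ) (hπ₀ : ∀ Y₀, 0 ≤ π₀ Y₀)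
    (hπ₀sum : ∑ Y₀ : A ≃ Fin K, π₀ Y₀ = 1)
    (Y : A ≃ Fin K) (T : ℕ)
    (Pwin : A → ℝ)
    (hPwin : ∀ y, Pwin y = ∑ Y₀ : A ≃ Fin K, π₀ Y₀ *
      (if |((Y₀ y : ℕ) : ℤ) - ((Y y : ℕ) : ℤ)| ≤ (T : ℤ) then (1 : ℝ) else 0))
    (hfull : ∀ y, 0 < Pwin y)
    (Ω : Type*) [MeasurableSpace Ω] (μ : Measure Ω) [IsProbabilityMeasure μ]
    (X : ℕ → Ω → (A ≃ Fin K) × (A → Bool))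
    (hmeas : ∀ i, @Measurable Ω ((A ≃ Fin K) × (A → Bool)) _
      (⊤ : MeasurableSpace ((A ≃ Fin K) × (A → Bool))) (X i))
    (hindep : ProbabilityTheory.iIndepFun
      (m := fun _ : ℕ => (⊤ : MeasurableSpace ((A ≃ Fin K) × (A → Bool)))) X μ)
    (hdist : ∀ (i : ℕ) (z : (A ≃ Fin K) × (A → Bool)),
      μ (X i ⁻¹' {z}) = ENNReal.ofReal (π₀ z.1 *
        ∏ y : A, (if z.2 y then rel y * p (z.1 y) else 1 - rel y * p (z.1 y)))) :
    TendstoInMeasure μ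
      (fun (n : ℕ) ω => ((n : ℝ))⁻¹ * ∑ i ∈ Finset.range n,
        ∑ y : A,
          (((if |(((X i ω).1 y : ℕ) : ℤ) - ((Y y : ℕ) : ℤ)| ≤ (T : ℤ) then (1 : ℝ) else 0) /
              Pwin y) * (p (Y y) / p ((X i ω).1 y))) *
            (if (X i ω).2 y then (1 : ℝ) else 0))
      atTop
      (fun _ => ∑ y : A, rel y * p (Y y)) :=
  interpol_weak_law_of_large_numbers_general K A p hp0 hp1 rel hrel0 hrel1 π₀ hπ₀ Y T Pwin hPwin
    hfull Ω μ X hmeas hindep hdist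
end

section
/- For each item y and window size T, the INTERPOL weight satisfies the bound 0 ≤ w_T(y|Y,Y₀) ≤ (max_{k: |k − rank(y|Y)| ≤ T} p_{rank(y|Y)}/p_k) / P(|rank(y|Y₀) − rank(y|Y)| ≤ T). In particular, if p is non-increasing in position, the weight is bounded by (p_{rank(y|Y)}/p_{min(K, rank(y|Y)+T)}) / P(window), which for fixed P(window) is smaller than the worst-case PBM weight bound p_{rank(y|Y)}/p_K when rank(y|Y)+T < K. -/
open Finset

/-- For each item `y` and window size `T`, the INTERPOL weight
satisfies `0 ≤ w_T ≤ (max over window positions k of p (rank(y|Y)) / p k) / P(window)`.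
If moreover `p` is non-increasing in position, the weight is bounded by
`(p (rank(y|Y)) / p (min (K-1) (rank(y|Y)+T))) / P(window)` (0-indexed positions),
which when `rank(y|Y) + T < K - 1`-most position is not reached, i.e.
`rank(y|Y) + T < K - 1`, is at most the worst-case PBM bound `p (rank(y|Y)) / p (K-1) / P(window)`. -/
theorem interpol_weight_bounds
    (K : ℕ) (A : Type*) [Fintype A] [DecidableEq A]
    (p : Fin K → ℝ) (hp0 : ∀ k, 0 < p k) (hp1 : ∀ k, p k ≤ 1)
    (π₀ : (A ≃ Fin K) → ℝ) (hπ₀ : ∀ Y₀, 0 ≤ π₀ Y₀)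
    (hπ₀sum : ∑ Y₀ : A ≃ Fin K, π₀ Y₀ = 1)
    (Y : A ≃ Fin K) (T : ℕ) (y : A)
    (Pwin : ℝ)
    (hPwin : Pwin = ∑ Y₀ : A ≃ Fin K, π₀ Y₀ *
      (if |((Y₀ y : ℕ) : ℤ) - ((Y y : ℕ) : ℤ)| ≤ (T : ℤ) then (1 : ℝ) else 0))
    (hfull : 0 < Pwin) :
    (∀ Y₀ : A ≃ Fin K,
      0 ≤ ((if |((Y₀ y : ℕ) : ℤ) - ((Y y : ℕ) : ℤ)| ≤ (T : ℤ) then (1 : ℝ) else 0) / Pwin) *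
        (p (Y y) / p (Y₀ y))) ∧
    (∀ Y₀ : A ≃ Fin K,
      ((if |((Y₀ y : ℕ) : ℤ) - ((Y y : ℕ) : ℤ)| ≤ (T : ℤ) then (1 : ℝ) else 0) / Pwin) *
        (p (Y y) / p (Y₀ y)) ≤
      ((Finset.univ.filter (fun k : Fin K =>
          |((k : ℕ) : ℤ) - ((Y y : ℕ) : ℤ)| ≤ (T : ℤ))).sup'
        ⟨Y y, by simp⟩ (fun k => p (Y y) / p k)) / Pwin) ∧
    ((∀ j k : Fin K, j ≤ k → p k ≤ p j) →
      (∀ Y₀ : A ≃ Fin K,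
        ((if |((Y₀ y : ℕ) : ℤ) - ((Y y : ℕ) : ℤ)| ≤ (T : ℤ) then (1 : ℝ) else 0) / Pwin) *
          (p (Y y) / p (Y₀ y)) ≤
        (p (Y y) / p (⟨min (K - 1) ((Y y : ℕ) + T), by
          have := (Y y).isLt; omega⟩ : Fin K)) / Pwin) ∧
      ((Y y : ℕ) + T < K - 1 →
        (p (Y y) / p (⟨min (K - 1) ((Y y : ℕ) + T), by
          have := (Y y).isLt; omega⟩ : Fin K)) / Pwin ≤
        (p (Y y) / p (⟨K - 1, by have := (Y y).isLt; omega⟩ : Fin K)) / Pwin)) := by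

  refine ⟨?_, ?_, ?_⟩
  · intro Y₀
    apply mul_nonneg
    · apply div_nonneg _ hfull.le
      split <;> norm_num
    · exact div_nonneg (hp0 _).le (hp0 _).le
  · intro Y₀
    rw [div_mul_eq_mul_div, div_le_div_iff_of_pos_right hfull]
    split
    · rename_i h
      rw [one_mul]
      exact Finset.le_sup' (f := fun k => p (Y y) / p k)
        (Finset.mem_filter.mpr ⟨Finset.mem_univ _, h⟩)
    · rw [zero_mul]
      calc (0:ℝ) ≤ p (Y y) / p (Y y) := div_nonneg (hp0 _).le (hp0 _).le
        _ ≤ _ := Finset.le_sup' (f := fun k => p (Y y) / p k)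
          (Finset.mem_filter.mpr ⟨Finset.mem_univ _, by simp⟩)
  · intro hmono
    constructor
    · intro Y₀
      rw [div_mul_eq_mul_div, div_le_div_iff_of_pos_right hfull]
      split
      · rename_i h
        rw [one_mul]
        apply div_le_div_of_nonneg_left (hp0 _).le (hp0 _)
        apply hmono
        have h1 := (Y₀ y).isLt
        have h2 : ((Y₀ y : ℕ) : ℤ) - ((Y y : ℕ) : ℤ) ≤ T := le_of_abs_le h
        rw [Fin.le_def]
        show (Y₀ y : ℕ) ≤ min (K - 1) ((Y y : ℕ) + T)
        omega
      · rw [zero_mul]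
        exact div_nonneg (hp0 _).le (hp0 _).le
    · intro hlt
      gcongr
      · exact (hp0 _).le
      · exact hp0 _
      apply hmono
      rw [Fin.le_def]
      show (min (K - 1) ((Y y : ℕ) + T)) ≤ K - 1
      omega
end

section
/- Under the position-based model with curve p and the swap-randomized logging marginal (stay probability q at base position, uniform otherwise), the variance of the single-item IPM term I{rank(y|Y₀)=target(y)}·c/P(rank(y|Y₀)=target(y)) evaluated when base(y) ≠ target(y) equals rel(y)·p_{target(y)}·( (K−1)/(1−q) − rel(y)·p_{target(y)} ), which tends to infinity as q → 1. -/
/-!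
Only the rank `r = target` contributes to either moment. There the logging probability equals the
propensity `c = (1 - q)/(K - 1)` used in the IPM weight, so the first moment is `rel y * p target`
(the estimator is unbiased) while the second moment keeps one uncancelled factor `1/c`, which blows
up as `q → 1`.
-/

open Filter Topology

lemma tendsto_inv_one_sub_nhdsLT_one : Tendsto (fun x : ℝ => (1 - x)⁻¹) (𝓝[<] 1) atTop := by
  refine tendsto_inv_nhdsGT_zero.comp ?_
  have hmaps : Set.MapsTo (fun x : ℝ => 1 - x) (Set.Iio 1) (Set.Ioi 0) :=
    fun x hx => show 0 < 1 - x from sub_pos.mpr hx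
  simpa only [sub_self] using
    (continuous_sub_left (1 : ℝ)).continuousWithinAt.tendsto_nhdsWithin (x := 1) hmaps

section IPMMoments
variable {ι : Type*} [Fintype ι] [DecidableEq ι] (m a : ι → ℝ) (t : ι) (c : ℝ)

lemma ipm_second_moment :
    ∑ r, m r * (a r * ((if r = t then (1 : ℝ) else 0) / c) ^ 2 + (1 - a r) * (0 : ℝ) ^ 2)
      = m t * a t / c ^ 2 := by
  rw [Fintype.sum_eq_single t fun r hr => by simp [hr]]
  simp only [if_true]; ring

lemma ipm_first_moment :
    ∑ r, m r * (a r * ((if r = t then (1 : ℝ) else 0) / c) + (1 - a r) * 0)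
      = m t * a t / c := by
  rw [Fintype.sum_eq_single t fun r hr => by simp [hr]]
  simp only [if_true]; ring

lemma ipm_variance_of_propensity_eq (hmt : m t = c) (hc : c ≠ 0) :
    (∑ r, m r * (a r * ((if r = t then (1 : ℝ) else 0) / c) ^ 2 + (1 - a r) * (0 : ℝ) ^ 2)) -
      (∑ r, m r * (a r * ((if r = t then (1 : ℝ) else 0) / c) + (1 - a r) * 0)) ^ 2
      = a t * (c⁻¹ - a t) := by
  rw [ipm_second_moment, ipm_first_moment, hmt]
  field_simp

end IPMMoments

theorem ipm_term_variance_swap_randomized_general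
    (K : ℕ) (A : Type*)
    (p : Fin K → ℝ) (hp0 : ∀ k, 0 < p k)
    (rel : A → ℝ) (y : A)
    (base target : Fin K) (hbt : base ≠ target)
    (q : ℝ) (hq1 : q < 1)
    (m : Fin K → ℝ)
    (hmother : ∀ k : Fin K, k ≠ base → m k = (1 - q) / ((K : ℝ) - 1)) :
    ((∑ r : Fin K, m r *
        ((rel y * p r) * ((if r = target then (1 : ℝ) else 0) / ((1 - q) / ((K : ℝ) - 1))) ^ 2 +
          (1 - rel y * p r) * ((0 : ℝ)) ^ 2)) -
      (∑ r : Fin K, m r *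
        ((rel y * p r) * ((if r = target then (1 : ℝ) else 0) / ((1 - q) / ((K : ℝ) - 1))) +
          (1 - rel y * p r) * 0)) ^ 2 =
      rel y * p target * (((K : ℝ) - 1) / (1 - q) - rel y * p target)) ∧
    (0 < rel y →
      Tendsto (fun q' : ℝ => rel y * p target * (((K : ℝ) - 1) / (1 - q') - rel y * p target))
        (nhdsWithin 1 (Set.Iio 1)) atTop) := by
  have hK : (0 : ℝ) < (K : ℝ) - 1 := by
    have : 2 ≤ K := Fin.nontrivial_iff_two_le.mp ⟨base, target, hbt⟩
    rw [sub_pos]; exact_mod_cast this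
  refine ⟨?_, fun hrel => ?_⟩
  · rw [ipm_variance_of_propensity_eq m (fun r => rel y * p r) target _ (hmother target hbt.symm)
      (div_pos (sub_pos.mpr hq1) hK).ne', inv_div]
  · have hpole : Tendsto (fun q' : ℝ => ((K : ℝ) - 1) / (1 - q')) (𝓝[<] 1) atTop := by
      simpa only [div_eq_mul_inv] using tendsto_inv_one_sub_nhdsLT_one.const_mul_atTop hK
    exact (tendsto_atTop_add_const_right _ _ hpole).const_mul_atTop (mul_pos hrel (hp0 target))

/-- Under the PBM with curve `p` and the swap-randomized logging
marginal (stay probability `q` at the base position, uniform `(1-q)/(K-1)`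
elsewhere), the variance of the single-item IPM term
`I{rank = target} * c / P(rank = target)` with `base ≠ target` equals
`rel y * p target * ((K-1)/(1-q) - rel y * p target)`, which tends to infinity
as `q → 1`.  Variance is written as `E[Z²] - (E[Z])²`, with the expectation taken
over both the rank randomization and the Bernoulli click. -/
theorem ipm_term_variance_swap_randomized
    (K : ℕ) (A : Type*) [Fintype A] [DecidableEq A]
    (p : Fin K → ℝ) (hp0 : ∀ k, 0 < p k) (hp1 : ∀ k, p k ≤ 1)
    (rel : A → ℝ) (y : A) (hrel0 : 0 ≤ rel y) (hrel1 : rel y ≤ 1)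
    (base target : Fin K) (hbt : base ≠ target)
    (q : ℝ) (hq0 : 0 < q) (hq1 : q < 1)
    (m : Fin K → ℝ)
    (hmbase : m base = q)
    (hmother : ∀ k : Fin K, k ≠ base → m k = (1 - q) / ((K : ℝ) - 1)) :
    ((∑ r : Fin K, m r *
        ((rel y * p r) * ((if r = target then (1 : ℝ) else 0) / ((1 - q) / ((K : ℝ) - 1))) ^ 2 +
          (1 - rel y * p r) * ((0 : ℝ)) ^ 2)) -
      (∑ r : Fin K, m r *
        ((rel y * p r) * ((if r = target then (1 : ℝ) else 0) / ((1 - q) / ((K : ℝ) - 1))) +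
          (1 - rel y * p r) * 0)) ^ 2 =
      rel y * p target * (((K : ℝ) - 1) / (1 - q) - rel y * p target)) ∧
    (0 < rel y →
      Tendsto (fun q' : ℝ => rel y * p target * (((K : ℝ) - 1) / (1 - q') - rel y * p target))
        (nhdsWithin 1 (Set.Iio 1)) atTop) :=
  ipm_term_variance_swap_randomized_general K A p hp0 rel y base target hbt q hq1 m hmother
end

section
/- Under the item-position click model with arbitrary click probabilities c̄(y,k), the IPM estimator Σ_{y∈Y₀} (I{rank(y|Y₀)=rank(y|Y)}/P(rank(y|Y₀)=rank(y|Y)))·c(y|Y₀) is an unbiased estimator of the target value Σ_y c̄(y, rank(y|Y)), provided every match probability P(rank(y|Y₀)=rank(y|Y)) is positive. -/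
/-- Under the item-position click model with arbitrary click
probabilities `c̄(y, k)`, the IPM estimator is an unbiased estimator of the
target value `∑ y, c̄(y, rank(y|Y))`, provided every rank-match probability
`Pmatch y = P(rank(y|Y₀) = rank(y|Y))` is positive.  Clicks are integrated out:
`E[c(y|Y₀)] = c̄(y, rank(y|Y₀))`. -/
theorem ipm_unbiased_under_ipm_model
    (K : ℕ) (A : Type*) [Fintype A] [DecidableEq A]
    (cbar : A → Fin K → ℝ) (hc0 : ∀ y k, 0 ≤ cbar y k) (hc1 : ∀ y k, cbar y k ≤ 1)
    (π₀ : (A ≃ Fin K) → ℝ) (hπ₀ : ∀ Y₀, 0 ≤ π₀ Y₀)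
    (hπ₀sum : ∑ Y₀ : A ≃ Fin K, π₀ Y₀ = 1)
    (Y : A ≃ Fin K)
    (Pmatch : A → ℝ)
    (hPmatch : ∀ y, Pmatch y = ∑ Y₀ : A ≃ Fin K, π₀ Y₀ *
      (if Y₀ y = Y y then (1 : ℝ) else 0))
    (hpos : ∀ y, 0 < Pmatch y) :
    ∑ Y₀ : A ≃ Fin K, π₀ Y₀ *
      ∑ y : A, ((if Y₀ y = Y y then (1 : ℝ) else 0) / Pmatch y) * cbar y (Y₀ y) =
    ∑ y : A, cbar y (Y y) := by
  simp_rw [Finset.mul_sum]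
  rw [Finset.sum_comm]
  refine Finset.sum_congr rfl fun y _ => ?_
  have h : ∀ Y₀ : A ≃ Fin K,
      π₀ Y₀ * (((if Y₀ y = Y y then (1 : ℝ) else 0) / Pmatch y) * cbar y (Y₀ y))
      = (π₀ Y₀ * (if Y₀ y = Y y then (1 : ℝ) else 0)) * (cbar y (Y y) / Pmatch y) := by
    intro Y₀
    by_cases hy : Y₀ y = Y y <;> simp [hy] <;> ring_nf <;> tauto
  simp_rw [h, ← Finset.sum_mul, ← hPmatch y]
  rw [mul_comm]; exact div_mul_cancel₀ _ (hpos y).ne'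
end
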